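/- On the ellipse Γ = {ξ = ξ_a} in elliptic coordinates, the Neumann–Poincaré operator satisfies K*_Γ[β_n^{c}] = (1/(2e^{2nξ_a})) β_n^{c} and K*_Γ[β_n^{s}] = −(1/(2e^{2nξ_a})) β_n^{s}, where β_n^{c}(η) = γ(ξ_a,η)^{−1} cos(nη) and β_n^{s}(η) = γ(ξ_a,η)^{−1} sin(nη) with γ(ξ_a,η) = l√(sinh²ξ_a + sin²η). -/

import Mathlib

/-- Metric factor `γ(ξ_a, η) = l √(sinh²ξ_a + sin²η)` on the ellipse `{ξ = ξ_a}`. -/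
noncomputable def ellipseGamma (l ξa η : ℝ) : ℝ :=
  l * Real.sqrt (Real.sinh ξa ^ 2 + Real.sin η ^ 2)

/-- The point of the ellipse `{ξ = ξ_a}` with elliptic angle `η`. -/
noncomputable def ellipsePt (l ξa η : ℝ) : ℝ × ℝ :=
  (l * Real.cosh ξa * Real.cos η, l * Real.sinh ξa * Real.sin η)

/-- Outward unit normal to the ellipse `{ξ = ξ_a}` at the point with angle `α`. -/
noncomputable def ellipseNu (l ξa α : ℝ) : ℝ × ℝ :=
  (l * Real.sinh ξa * Real.cos α / ellipseGamma l ξa α,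
   l * Real.cosh ξa * Real.sin α / ellipseGamma l ξa α)

/-- Neumann–Poincaré kernel `∂G(x,y)/∂ν(x) = ⟨x−y, ν(x)⟩/(2π|x−y|²)` on the
ellipse, with `x = x(α)`, `y = x(η)`. -/
noncomputable def ellipseNPKernel (l ξa α η : ℝ) : ℝ :=
  (((ellipsePt l ξa α).1 - (ellipsePt l ξa η).1) * (ellipseNu l ξa α).1 +
    ((ellipsePt l ξa α).2 - (ellipsePt l ξa η).2) * (ellipseNu l ξa α).2) /
  (2 * Real.pi * (((ellipsePt l ξa α).1 - (ellipsePt l ξa η).1) ^ 2 +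
    ((ellipsePt l ξa α).2 - (ellipsePt l ξa η).2) ^ 2))

/-!
In the angle variables the Neumann–Poincaré kernel of the ellipse `{ξ = ξ_a}` is, off the
diagonal, `P_w(e^{iη}) / (4π γ(ξ_a, α))`, where `P_w` is the Poisson kernel of the unit disc at
`w = e^{-2ξ_a} e^{-iα}`. The weight `γ⁻¹` of `β_n` cancels the arc length element, and the Poisson
integral formula for `z ↦ zⁿ` gives `∫ P_w(e^{iη}) e^{inη} dη = 2π wⁿ = 2π e^{-2nξ_a} e^{-inα}`;
its real and imaginary parts are the two eigenrelations.
-/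

open Complex Metric MeasureTheory

section Poisson

variable {w : ℂ}

theorem continuous_poissonKernel_circleMap (hw : w ∈ ball (0 : ℂ) 1) :
    Continuous fun η : ℝ ↦ poissonKernel 0 w (circleMap 0 1 η) := by
  have hne : ∀ η : ℝ, circleMap 0 1 η - w ≠ 0 := fun η h ↦ by
    have : ‖circleMap (0 : ℂ) 1 η‖ = ‖w‖ := by rw [sub_eq_zero.1 h]
    simp only [norm_circleMap_zero, abs_one, mem_ball, dist_zero_right] at this hw
    linarith
  simp only [poissonKernel, sub_zero]
  exact ((by fun_prop : Continuous fun η : ℝ ↦ ‖circleMap (0 : ℂ) 1 η‖ ^ 2 - ‖w‖ ^ 2)).div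
    (by fun_prop) fun η ↦ by simpa using hne η

theorem integral_poissonKernel_circleMap_mul_pow (hw : w ∈ ball (0 : ℂ) 1) (n : ℕ) :
    ∫ η in (0 : ℝ)..2 * Real.pi, (poissonKernel 0 w (circleMap 0 1 η) : ℂ) * circleMap 0 1 η ^ n
      = 2 * Real.pi * w ^ n := by
  have h := (Differentiable.diffContOnCl (s := ball (0 : ℂ) 1)
    (by fun_prop : Differentiable ℂ fun z : ℂ ↦ z ^ n)).circleAverage_poissonKernel_smul hw
  rw [Real.circleAverage_def] at h
  simp only [Pi.smul_apply', Complex.real_smul] at h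
  rw [← h]
  have hπ : (Real.pi : ℂ) ≠ 0 := by exact_mod_cast Real.pi_ne_zero
  push_cast
  field_simp

theorem intervalIntegrable_poissonKernel_circleMap_mul_pow (hw : w ∈ ball (0 : ℂ) 1) (n : ℕ)
    (a b : ℝ) :
    IntervalIntegrable
      (fun η : ℝ ↦ (poissonKernel 0 w (circleMap 0 1 η) : ℂ) * circleMap 0 1 η ^ n) volume a b :=
  ((continuous_ofReal.comp (continuous_poissonKernel_circleMap hw)).mul
    (by fun_prop)).intervalIntegrable _ _

theorem integral_poissonKernel_circleMap_mul_cos (hw : w ∈ ball (0 : ℂ) 1) (n : ℕ) :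
    ∫ η in (0 : ℝ)..2 * Real.pi, poissonKernel 0 w (circleMap 0 1 η) * Real.cos (n * η)
      = 2 * Real.pi * (w ^ n).re := by
  have := congrArg re (integral_poissonKernel_circleMap_mul_pow hw n)
  rw [← reCLM_apply, ← reCLM.intervalIntegral_comp_comm
    (intervalIntegrable_poissonKernel_circleMap_mul_pow hw n _ _)] at this
  simpa [circleMap, ← Complex.exp_nat_mul, Complex.exp_re, mul_comm] using this

theorem integral_poissonKernel_circleMap_mul_sin (hw : w ∈ ball (0 : ℂ) 1) (n : ℕ) :
    ∫ η in (0 : ℝ)..2 * Real.pi, poissonKernel 0 w (circleMap 0 1 η) * Real.sin (n * η)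
      = 2 * Real.pi * (w ^ n).im := by
  have := congrArg im (integral_poissonKernel_circleMap_mul_pow hw n)
  rw [← imCLM_apply, ← imCLM.intervalIntegral_comp_comm
    (intervalIntegrable_poissonKernel_circleMap_mul_pow hw n _ _)] at this
  simpa [circleMap, ← Complex.exp_nat_mul, Complex.exp_im, mul_comm] using this

end Poisson

theorem poissonKernel_circleMap (r α η : ℝ) :
    poissonKernel 0 (r * exp (-α * I)) (circleMap 0 1 η)
      = (1 - r ^ 2) / (1 - 2 * r * Real.cos (α + η) + r ^ 2) := by
  simp only [poissonKernel, sub_zero, Complex.sq_norm, circleMap, normSq_apply, ofReal_one,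
    one_mul, zero_add, exp_re, exp_im, mul_re, mul_im, ofReal_re, ofReal_im, I_re, I_im, neg_re,
    neg_im, sub_re, sub_im, mul_zero, zero_mul, mul_one, sub_self, add_zero, neg_mul, neg_zero,
    neg_neg, mul_neg, sub_neg_eq_add, Real.exp_zero, Real.cos_neg, Real.sin_neg, Real.cos_add]
  have hα := Real.sin_sq_add_cos_sq α
  have hη := Real.sin_sq_add_cos_sq η
  congr 1
  · linear_combination hη - r ^ 2 * hα
  · linear_combination hη + r ^ 2 * hα

theorem mem_ball_exp_neg_mul_exp {ξ : ℝ} (hξ : 0 < ξ) (α : ℝ) :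
    (Real.exp (-ξ) * exp (-α * I) : ℂ) ∈ ball (0 : ℂ) 1 := by
  simpa [Complex.norm_exp] using hξ

theorem ofReal_mul_exp_neg_mul_I_pow_re (r α : ℝ) (n : ℕ) :
    (((r : ℂ) * exp (-α * I)) ^ n).re = r ^ n * Real.cos (n * α) := by
  rw [mul_pow, ← Complex.exp_nat_mul, ← ofReal_pow, re_ofReal_mul,
    show (n : ℂ) * (-α * I) = ((-(n * α) : ℝ) : ℂ) * I by push_cast; ring, exp_ofReal_mul_I_re,
    Real.cos_neg]

theorem ofReal_mul_exp_neg_mul_I_pow_im (r α : ℝ) (n : ℕ) :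
    (((r : ℂ) * exp (-α * I)) ^ n).im = -(r ^ n * Real.sin (n * α)) := by
  rw [mul_pow, ← Complex.exp_nat_mul, ← ofReal_pow, im_ofReal_mul,
    show (n : ℂ) * (-α * I) = ((-(n * α) : ℝ) : ℂ) * I by push_cast; ring, exp_ofReal_mul_I_im,
    Real.sin_neg, mul_neg]

theorem Real.sinh_div_cosh_sub_cos (t θ : ℝ) :
    Real.sinh t / (Real.cosh t - Real.cos θ)
      = (1 - Real.exp (-t) ^ 2) / (1 - 2 * Real.exp (-t) * Real.cos θ + Real.exp (-t) ^ 2) := by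
  have h : 2 * Real.exp (-t) ≠ 0 := by positivity
  rw [← mul_div_mul_right _ _ h, Real.sinh_eq, Real.cosh_eq]
  have hu : Real.exp t * Real.exp (-t) = 1 := by rw [← Real.exp_add, add_neg_cancel, Real.exp_zero]
  congr 1 <;> linear_combination hu

section Ellipse

variable {l ξa : ℝ}

theorem ellipseGamma_pos (hl : 0 < l) (hξa : ξa ≠ 0) (η : ℝ) : 0 < ellipseGamma l ξa η := by
  have : Real.sinh ξa ≠ 0 := by simpa using hξa
  unfold ellipseGamma
  positivity

theorem ellipsePt_sub_normSq (l ξa α η : ℝ) :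
    ((ellipsePt l ξa α).1 - (ellipsePt l ξa η).1) ^ 2
        + ((ellipsePt l ξa α).2 - (ellipsePt l ξa η).2) ^ 2
      = l ^ 2 * (1 - Real.cos (α - η)) * (Real.cosh (2 * ξa) - Real.cos (α + η)) := by
  simp only [ellipsePt, Real.cos_sub, Real.cos_add, Real.cosh_two_mul]
  linear_combination (l ^ 2 * (Real.sin α * Real.sin η - Real.cos α * Real.cos η
      + Real.cos α ^ 2 + Real.cos η ^ 2 - 1)) * Real.cosh_sq ξa
    + (l ^ 2 * (Real.sinh ξa ^ 2 + Real.sin η ^ 2)) * Real.sin_sq_add_cos_sq α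
    + (l ^ 2 * (Real.sinh ξa ^ 2 + 1 - Real.cos α ^ 2)) * Real.sin_sq_add_cos_sq η

theorem ellipsePt_sub_inner_ellipseNu (l ξa α η : ℝ) :
    ((ellipsePt l ξa α).1 - (ellipsePt l ξa η).1) * (ellipseNu l ξa α).1
        + ((ellipsePt l ξa α).2 - (ellipsePt l ξa η).2) * (ellipseNu l ξa α).2
      = l ^ 2 * Real.sinh (2 * ξa) * (1 - Real.cos (α - η)) / (2 * ellipseGamma l ξa α) := by
  simp only [ellipsePt, ellipseNu, Real.cos_sub, Real.sinh_two_mul, div_eq_mul_inv, mul_inv]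
  linear_combination (l ^ 2 * Real.sinh ξa * Real.cosh ξa * (ellipseGamma l ξa α)⁻¹)
    * Real.sin_sq_add_cos_sq α

-- The hypothesis excludes the diagonal `x(α) = x(η)`, where the defining quotient is `0 / 0`.
theorem ellipseNPKernel_eq_poissonKernel (hl : l ≠ 0) {α η : ℝ} (h : Real.cos (α - η) ≠ 1) :
    ellipseNPKernel l ξa α η
      = poissonKernel 0 (Real.exp (-(2 * ξa)) * exp (-α * I)) (circleMap 0 1 η)
          / (4 * Real.pi * ellipseGamma l ξa α) := by
  have hc : 1 - Real.cos (α - η) ≠ 0 := sub_ne_zero.2 h.symm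
  rw [ellipseNPKernel, ellipsePt_sub_inner_ellipseNu, ellipsePt_sub_normSq, poissonKernel_circleMap,
    ← Real.sinh_div_cosh_sub_cos]
  field_simp
  ring

theorem ae_cos_sub_ne_one (α : ℝ) : ∀ᵐ η : ℝ, Real.cos (α - η) ≠ 1 := by
  have hsub : {η : ℝ | Real.cos (α - η) ≠ 1}ᶜ ⊆ Set.range fun k : ℤ ↦ α - k * (2 * Real.pi) :=
    fun η hη ↦ by
      obtain ⟨k, hk⟩ := (Real.cos_eq_one_iff _).1 (not_not.1 hη)
      exact ⟨k, by linarith⟩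
  exact measure_mono_null hsub ((Set.countable_range _).measure_zero _)

theorem integral_ellipseNPKernel_mul (hl : 0 < l) (hξa : ξa ≠ 0) (α : ℝ) (f : ℝ → ℝ) :
    ∫ η in (0 : ℝ)..2 * Real.pi,
        ellipseNPKernel l ξa α η * ((ellipseGamma l ξa η)⁻¹ * f η) * ellipseGamma l ξa η
      = (∫ η in (0 : ℝ)..2 * Real.pi,
          poissonKernel 0 (Real.exp (-(2 * ξa)) * exp (-α * I)) (circleMap 0 1 η) * f η)
          / (4 * Real.pi * ellipseGamma l ξa α) := by
  rw [← intervalIntegral.integral_div]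
  refine intervalIntegral.integral_congr_ae ?_
  filter_upwards [ae_cos_sub_ne_one α] with η hη _
  rw [ellipseNPKernel_eq_poissonKernel hl.ne' hη]
  field_simp [(ellipseGamma_pos hl hξa η).ne']

end Ellipse

theorem neumannPoincare_ellipse_eigen_general (l ξa : ℝ) (hl : 0 < l) (hξa : 0 < ξa)
    (n : ℕ) (α : ℝ) :
    (∫ η in (0:ℝ)..(2 * Real.pi),
        ellipseNPKernel l ξa α η * ((ellipseGamma l ξa η)⁻¹ * Real.cos (n * η)) *
          ellipseGamma l ξa η)
      = (1 / (2 * Real.exp (2 * n * ξa))) * ((ellipseGamma l ξa α)⁻¹ * Real.cos (n * α)) ∧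
    (∫ η in (0:ℝ)..(2 * Real.pi),
        ellipseNPKernel l ξa α η * ((ellipseGamma l ξa η)⁻¹ * Real.sin (n * η)) *
          ellipseGamma l ξa η)
      = -(1 / (2 * Real.exp (2 * n * ξa))) * ((ellipseGamma l ξa α)⁻¹ * Real.sin (n * α)) := by
  have hw := mem_ball_exp_neg_mul_exp (by positivity : 0 < 2 * ξa) α
  have hγ := (ellipseGamma_pos hl hξa.ne' α).ne'
  have hr : Real.exp (-(2 * ξa)) ^ n = (Real.exp (2 * n * ξa))⁻¹ := by
    rw [← Real.exp_nat_mul, ← Real.exp_neg]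
    ring_nf
  constructor
  · rw [integral_ellipseNPKernel_mul hl hξa.ne', integral_poissonKernel_circleMap_mul_cos hw,
      ofReal_mul_exp_neg_mul_I_pow_re, hr]
    field_simp
    ring
  · rw [integral_ellipseNPKernel_mul hl hξa.ne', integral_poissonKernel_circleMap_mul_sin hw,
      ofReal_mul_exp_neg_mul_I_pow_im, hr]
    field_simp
    ring

/-- Spectral action of the Neumann–Poincaré operator on the ellipse `{ξ = ξ_a}`:
`K*_Γ[β_n^c] = (1/(2e^{2nξ_a})) β_n^c` and `K*_Γ[β_n^s] = −(1/(2e^{2nξ_a})) β_n^s`,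
where `β_n^c(η) = γ(ξ_a,η)⁻¹ cos(nη)`, `β_n^s(η) = γ(ξ_a,η)⁻¹ sin(nη)` and the
arc length element is `ds = γ dη`. -/
theorem neumannPoincare_ellipse_eigen (l ξa : ℝ) (hl : 0 < l) (hξa : 0 < ξa)
    (n : ℕ) (hn : 1 ≤ n) (α : ℝ) :
    (∫ η in (0:ℝ)..(2 * Real.pi),
        ellipseNPKernel l ξa α η * ((ellipseGamma l ξa η)⁻¹ * Real.cos (n * η)) *
          ellipseGamma l ξa η)
      = (1 / (2 * Real.exp (2 * n * ξa))) * ((ellipseGamma l ξa α)⁻¹ * Real.cos (n * α)) ∧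
    (∫ η in (0:ℝ)..(2 * Real.pi),
        ellipseNPKernel l ξa α η * ((ellipseGamma l ξa η)⁻¹ * Real.sin (n * η)) *
          ellipseGamma l ξa η)
      = -(1 / (2 * Real.exp (2 * n * ξa))) * ((ellipseGamma l ξa α)⁻¹ * Real.sin (n * α)) :=
  neumannPoincare_ellipse_eigen_general l ξa hl hξa n α
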